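/- Let (X,d) be a doubling quasi-metric space. Then (X,d) satisfies the Besicovitch Covering Property if and only if (X,d) satisfies the Weak Besicovitch Covering Property. -/

import Mathlib

/-- The closed ball of center `p` and radius `r` for a distance-like function `d`. -/
def QBall {X : Type*} (d : X → X → ℝ) (p : X) (r : ℝ) : Set X := {q | d q p ≤ r}

/-- A quasi-distance: symmetric, vanishing exactly on the diagonal, nonnegative, and
satisfying a quasi-triangle inequality with multiplicative constant `C ≥ 1`. -/
def IsQuasiDist {X : Type*} (d : X → X → ℝ) : Prop :=
  (∀ p q, 0 ≤ d p q) ∧ (∀ p q, d p q = d q p) ∧ (∀ p q, d p q = 0 ↔ p = q) ∧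
    ∃ C : ℝ, 1 ≤ C ∧ ∀ p p' q, d p q ≤ C * (d p p' + d p' q)

/-- A set is bounded if it is contained in some ball. -/
def QBounded {X : Type*} (d : X → X → ℝ) (A : Set X) : Prop :=
  ∃ p r, 0 < r ∧ A ⊆ QBall d p r

/-- `(X,d)` is doubling: there is `C ≥ 1` such that every ball of radius `2r` can be
covered by at most `C` balls of radius `r`. -/
def IsDoubling {X : Type*} (d : X → X → ℝ) : Prop :=
  ∃ C : ℕ, 1 ≤ C ∧ ∀ (p : X) (r : ℝ), 0 < r →
    ∃ t : Finset X, t.card ≤ C ∧ QBall d p (2 * r) ⊆ ⋃ x ∈ t, QBall d x r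

/-- The Besicovitch Covering Property. -/
def HasBCP {X : Type*} (d : X → X → ℝ) : Prop :=
  ∃ N : ℕ, 1 ≤ N ∧ ∀ (A : Set X) (r : X → ℝ), QBounded d A → (∀ a ∈ A, 0 < r a) →
    ∃ F : Set X, F ⊆ A ∧ F.Countable ∧ (∀ a ∈ A, ∃ x ∈ F, a ∈ QBall d x (r x)) ∧
      ∀ y : X, ({x ∈ F | y ∈ QBall d x (r x)}).encard ≤ (N : ℕ∞)

/-- A family of Besicovitch balls: a finite family of balls `B(x, r x)`, `x ∈ s`, such that
no center belongs to the ball of another center, with nonvoid common intersection. -/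
def IsBesicovitchFamily {X : Type*} (d : X → X → ℝ) (s : Finset X) (r : X → ℝ) : Prop :=
  (∀ x ∈ s, 0 < r x) ∧ (∀ x ∈ s, ∀ y ∈ s, x ≠ y → x ∉ QBall d y (r y)) ∧
    ∃ z, ∀ x ∈ s, z ∈ QBall d x (r x)

/-- The Weak Besicovitch Covering Property. -/
def HasWBCP {X : Type*} (d : X → X → ℝ) : Prop :=
  ∃ Q : ℕ, 1 ≤ Q ∧ ∀ (s : Finset X) (r : X → ℝ), IsBesicovitchFamily d s r → s.card ≤ Q

/-!
BCP gives WBCP directly: for the centres of a Besicovitch family, the subcover provided by BCP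
must be the whole family, since no centre lies in another ball, and the common point lies in all
of its balls.

Conversely, select balls greedily: each time, a ball whose centre is not yet covered and whose
radius exceeds half of the supremum of the radii still available (if some radius is large
compared with the size of the set, a single ball covers it). A centre never covered would give
an infinite separated sequence in a bounded set, which doubling forbids. Among the selected balls
through a point `y`, those of the same dyadic scale have separated centres within a ball of that
scale around `y`, so doubling bounds their number; and choosing one ball for each scale of a
given parity gives a Besicovitch family with common point `y`, so WBCP bounds the number of
scales.
-/

open Finset

section Doubling

variable {X : Type*} {d : X → X → ℝ} {D : ℕ} {C : ℝ}

def IsDoublingWith (d : X → X → ℝ) (D : ℕ) : Prop :=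
  ∀ (p : X) (r : ℝ), 0 < r →
    ∃ t : Finset X, t.card ≤ D ∧ QBall d p (2 * r) ⊆ ⋃ x ∈ t, QBall d x r

theorem IsDoublingWith.exists_cover_pow (hD : IsDoublingWith d D) (j : ℕ) (p : X) {r : ℝ}
    (hr : 0 < r) :
    ∃ t : Finset X, t.card ≤ D ^ j ∧ QBall d p (2 ^ j * r) ⊆ ⋃ x ∈ t, QBall d x r := by
  classical
  induction j generalizing p with
  | zero => exact ⟨{p}, by simp, by simp⟩
  | succ j ih =>
    obtain ⟨t, ht, hcover⟩ := hD p (2 ^ j * r) (by positivity)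
    choose f hf hfcover using ih
    refine ⟨t.biUnion f, ?_, ?_⟩
    · calc (t.biUnion f).card ≤ ∑ x ∈ t, (f x).card := Finset.card_biUnion_le
        _ ≤ t.card * D ^ j := Finset.sum_le_card_nsmul _ _ _ fun x _ => hf x
        _ ≤ D ^ (j + 1) := by rw [pow_succ']; exact Nat.mul_le_mul_right _ ht
    · intro q hq
      rw [pow_succ, mul_comm _ (2 : ℝ), mul_assoc] at hq
      obtain ⟨x, hx, hqx⟩ := Set.mem_iUnion₂.1 (hcover hq)
      obtain ⟨c, hc, hqc⟩ := Set.mem_iUnion₂.1 (hfcover x hqx)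
      exact Set.mem_iUnion₂.2 ⟨c, Finset.mem_biUnion.2 ⟨x, hx, hc⟩, hqc⟩

/-- Each ball of radius `ε / (2 C)` contains at most one point of an `ε`-separated set. -/
theorem IsDoublingWith.card_le_of_pairwise_lt (hD : IsDoublingWith d D)
    (hsymm : ∀ p q, d p q = d q p) (htri : ∀ p p' q, d p q ≤ C * (d p p' + d p' q))
    (hC : 0 < C) {ε R : ℝ} {j : ℕ} (hε : 0 < ε) (hR : 2 * C * R ≤ 2 ^ j * ε) {p : X}
    {t : Finset X} (ht : ↑t ⊆ QBall d p R) (hsep : (t : Set X).Pairwise fun x y => ε < d x y) :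
    t.card ≤ D ^ j := by
  set ρ := ε / (2 * C)
  have hρ : 2 * C * ρ = ε := mul_div_cancel₀ ε (by positivity)
  obtain ⟨s, hs, hcover⟩ := hD.exists_cover_pow j p (r := ρ) (by positivity)
  have hRρ : R ≤ 2 ^ j * ρ := by
    rw [← mul_div_assoc, le_div_iff₀ (by positivity)]
    linarith
  have hsub : QBall d p R ⊆ QBall d p (2 ^ j * ρ) := fun q (hq : d q p ≤ R) => hq.trans hRρ
  refine le_trans (Finset.card_le_card_of_forall_subsingleton (fun x c => x ∈ QBall d c ρ)
    (fun x hx => by simpa using hcover (hsub (ht hx))) ?_) hs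
  rintro c - a ⟨ha, hac⟩ b ⟨hb, hbc⟩
  by_contra hab
  have hdab := htri a c b
  rw [hsymm c b] at hdab
  change d a c ≤ ρ at hac
  change d b c ≤ ρ at hbc
  have : d a b ≤ 2 * C * ρ := by nlinarith
  exact (hsep ha hb hab).not_ge (hρ ▸ this)

theorem IsDoublingWith.finite_of_pairwise_lt (hD : IsDoublingWith d D)
    (hsymm : ∀ p q, d p q = d q p) (htri : ∀ p p' q, d p q ≤ C * (d p p' + d p' q))
    (hC : 0 < C) {ε R : ℝ} (hε : 0 < ε) {p : X} {s : Set X} (hs : s ⊆ QBall d p R)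
    (hsep : s.Pairwise fun x y => ε < d x y) : s.Finite := by
  obtain ⟨j, hj⟩ := pow_unbounded_of_one_lt (2 * C * R / ε) one_lt_two
  by_contra hinf
  obtain ⟨t, hts, ht⟩ := Set.Infinite.exists_subset_card_eq hinf (D ^ j + 1)
  have := hD.card_le_of_pairwise_lt hsymm htri hC hε ((div_le_iff₀ hε).1 hj.le)
    (hts.trans hs) (hsep.mono hts)
  omega

end Doubling

section Greedy

variable {X : Type*} {d : X → X → ℝ} {A : Set X} {r : X → ℝ}

def IsUncovered (d : X → X → ℝ) (r : X → ℝ) (s : Set X) (a : X) : Prop :=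
  ∀ x ∈ s, r x < d a x

def SelectableAfter (d : X → X → ℝ) (r : X → ℝ) (x y : X) : Prop :=
  r x < d y x ∧ r y ≤ 2 * r x

def IsGreedyChoice (d : X → X → ℝ) (A : Set X) (r : X → ℝ) (s : Set X) (a : X) : Prop :=
  a ∈ A ∧ IsUncovered d r s a ∧ ∀ b ∈ A, IsUncovered d r s b → r b ≤ 2 * r a

open Classical in
noncomputable def greedyStep (d : X → X → ℝ) (A : Set X) (r : X → ℝ) (s : Set X) :
    Set X :=
  if h : ∃ a, IsGreedyChoice d A r s a then insert h.choose s else s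

noncomputable def greedySets (d : X → X → ℝ) (A : Set X) (r : X → ℝ) : ℕ → Set X
  | 0 => ∅
  | n + 1 => greedyStep d A r (greedySets d A r n)

theorem exists_greedyStep_eq_insert {s : Set X} (h : ∃ a, IsGreedyChoice d A r s a) :
    ∃ a, IsGreedyChoice d A r s a ∧ greedyStep d A r s = insert a s :=
  ⟨h.choose, h.choose_spec, dif_pos h⟩

theorem subset_greedyStep (s : Set X) : s ⊆ greedyStep d A r s := by
  unfold greedyStep
  split_ifs
  exacts [Set.subset_insert _ _, subset_rfl]

theorem greedySets_mono : Monotone (greedySets d A r) :=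
  monotone_nat_of_le_succ fun _ => subset_greedyStep _

theorem greedySets_finite (n : ℕ) : (greedySets d A r n).Finite := by
  induction n with
  | zero => exact Set.finite_empty
  | succ n ih =>
    change (greedyStep d A r _).Finite
    unfold greedyStep
    split_ifs
    exacts [ih.insert _, ih]

def IsGreedyFamily (d : X → X → ℝ) (A : Set X) (r : X → ℝ) (s : Set X) : Prop :=
  s ⊆ A ∧ s.Pairwise (fun x y => SelectableAfter d r x y ∨ SelectableAfter d r y x) ∧
    ∀ x ∈ s, ∀ b ∈ A, IsUncovered d r s b → r b ≤ 2 * r x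

theorem IsGreedyFamily.greedyStep {s : Set X} (hs : IsGreedyFamily d A r s) :
    IsGreedyFamily d A r (greedyStep d A r s) := by
  by_cases h : ∃ a, IsGreedyChoice d A r s a
  · obtain ⟨a, ⟨haA, hunc, hmax⟩, heq⟩ := exists_greedyStep_eq_insert h
    obtain ⟨hsA, hpair, hradius⟩ := hs
    have hunc_of_insert : ∀ b, IsUncovered d r (insert a s) b → IsUncovered d r s b :=
      fun b hb x hx => hb x (Set.mem_insert_of_mem a hx)
    rw [heq]
    refine ⟨Set.insert_subset haA hsA, ?_, ?_⟩
    · refine Set.pairwise_insert.2 ⟨hpair, fun x hx _ => ?_⟩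
      have hxa : SelectableAfter d r x a := ⟨hunc x hx, hradius x hx a haA hunc⟩
      exact ⟨Or.inr hxa, Or.inl hxa⟩
    · rintro x (rfl | hx) b hb hub
      exacts [hmax b hb (hunc_of_insert b hub), hradius x hx b hb (hunc_of_insert b hub)]
  · unfold _root_.greedyStep
    rwa [dif_neg h]

theorem isGreedyFamily_greedySets (n : ℕ) : IsGreedyFamily d A r (greedySets d A r n) := by
  induction n with
  | zero => exact ⟨Set.empty_subset _, Set.pairwise_empty _, fun x hx => hx.elim⟩
  | succ n ih => exact ih.greedyStep

/-- Taking `a` with `r a` above half the supremum of the radii of the uncovered points. -/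
theorem exists_isGreedyChoice {R : ℝ} (hr : ∀ a ∈ A, 0 < r a) (hR : ∀ a ∈ A, r a ≤ R)
    {s : Set X} {a₀ : X} (ha₀ : a₀ ∈ A) (hunc : IsUncovered d r s a₀) :
    ∃ a, IsGreedyChoice d A r s a := by
  set U : Set X := {b | b ∈ A ∧ IsUncovered d r s b}
  have hbdd : BddAbove (r '' U) := ⟨R, by rintro _ ⟨b, hb, rfl⟩; exact hR b hb.1⟩
  have hsup : 0 < sSup (r '' U) :=
    (hr a₀ ha₀).trans_le (le_csSup hbdd ⟨a₀, ⟨ha₀, hunc⟩, rfl⟩)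
  obtain ⟨_, ⟨a, ⟨haA, hauc⟩, rfl⟩, hlt⟩ :=
    exists_lt_of_lt_csSup (Set.Nonempty.image r (⟨a₀, ha₀, hunc⟩ : U.Nonempty))
      (half_lt_self hsup)
  refine ⟨a, haA, hauc, fun b hb hub => ?_⟩
  have : r b ≤ sSup (r '' U) := le_csSup hbdd ⟨b, ⟨hb, hub⟩, rfl⟩
  linarith

/-- If `a` were never covered, the greedy algorithm would select an infinite sequence whose
points are `r a / 2`-separated. -/
theorem exists_not_isUncovered_greedySets (hsymm : ∀ p q, d p q = d q p)
    (hdiag : ∀ x, d x x = 0) {R : ℝ} (hr : ∀ a ∈ A, 0 < r a) (hR : ∀ a ∈ A, r a ≤ R)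
    (hfin : ∀ ε > 0, ∀ s ⊆ A, s.Pairwise (fun x y => ε < d x y) → s.Finite)
    {a : X} (ha : a ∈ A) : ∃ n, ¬ IsUncovered d r (greedySets d A r n) a := by
  by_contra! hunc
  choose g hg hstep using fun n =>
    exists_greedyStep_eq_insert (exists_isGreedyChoice hr hR ha (hunc n))
  have hmem : ∀ m n, m < n → g m ∈ greedySets d A r n := fun m n hmn =>
    greedySets_mono hmn (show g m ∈ greedyStep d A r _ from hstep m ▸ Set.mem_insert _ _)
  have hsep : ∀ m n, m < n → r a / 2 < d (g n) (g m) := fun m n hmn => by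
    have h₁ := (hg n).2.1 _ (hmem m n hmn)
    have h₂ := (hg m).2.2 a ha (hunc m)
    linarith
  have hinj : Function.Injective g := Function.Injective.of_lt_imp_ne fun m n hmn heq => by
    have := (hg n).2.1 _ (hmem m n hmn)
    rw [heq, hdiag] at this
    exact (hr _ (hg n).1).not_gt this
  refine Set.infinite_range_of_injective hinj
    (hfin (r a / 2) (half_pos (hr a ha)) _ (Set.range_subset_iff.2 fun n => (hg n).1) ?_)
  rintro _ ⟨m, rfl⟩ _ ⟨n, rfl⟩ hne
  rcases lt_or_gt_of_ne (ne_of_apply_ne g hne) with hmn | hnm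
  · exact hsymm (g n) (g m) ▸ hsep m n hmn
  · exact hsep n m hnm

theorem exists_greedy_cover (hsymm : ∀ p q, d p q = d q p) (hdiag : ∀ x, d x x = 0)
    {R : ℝ} (hr : ∀ a ∈ A, 0 < r a) (hR : ∀ a ∈ A, r a ≤ R)
    (hfin : ∀ ε > 0, ∀ s ⊆ A, s.Pairwise (fun x y => ε < d x y) → s.Finite) :
    ∃ F ⊆ A, F.Countable ∧ (∀ a ∈ A, ∃ x ∈ F, a ∈ QBall d x (r x)) ∧
      F.Pairwise (fun x y => SelectableAfter d r x y ∨ SelectableAfter d r y x) := by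
  refine ⟨⋃ n, greedySets d A r n, Set.iUnion_subset fun n => (isGreedyFamily_greedySets n).1,
    Set.countable_iUnion fun n => (greedySets_finite n).countable, fun a ha => ?_,
    (Set.pairwise_iUnion greedySets_mono.directed_le).2 fun n =>
      (isGreedyFamily_greedySets n).2.1⟩
  obtain ⟨n, hn⟩ := exists_not_isUncovered_greedySets hsymm hdiag hr hR hfin ha
  obtain ⟨x, hx, hax⟩ : ∃ x ∈ greedySets d A r n, d a x ≤ r x := by
    simpa [IsUncovered] using hn
  exact ⟨x, Set.mem_iUnion.2 ⟨n, hx⟩, hax⟩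

end Greedy

theorem two_mul_lt_of_log_add_two_le {a b : ℝ} (hb : 0 < b)
    (h : Int.log 2 a + 2 ≤ Int.log 2 b) : 2 * a < b :=
  calc 2 * a < 2 * (2 : ℝ) ^ (Int.log 2 a + 1) := by
        have := Int.lt_zpow_succ_log_self (b := 2) one_lt_two a
        push_cast at this
        linarith
    _ = (2 : ℝ) ^ (Int.log 2 a + 2) := by
        rw [zpow_add_one₀ two_ne_zero, zpow_add₀ two_ne_zero]
        ring
    _ ≤ (2 : ℝ) ^ Int.log 2 b := zpow_le_zpow_right₀ one_le_two h
    _ ≤ b := by exact_mod_cast Int.zpow_log_le_self one_lt_two hb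

section Overlap

variable {X : Type*} {d : X → X → ℝ} {r : X → ℝ} {x y : X}

theorem min_lt_of_selectableAfter (hsymm : ∀ p q, d p q = d q p)
    (h : SelectableAfter d r x y ∨ SelectableAfter d r y x) : min (r x) (r y) < d x y := by
  rcases h with h | h
  · exact (min_le_left _ _).trans_lt (hsymm x y ▸ h.1)
  · exact (min_le_right _ _).trans_lt h.1

theorem notMem_qBall_of_selectableAfter (hsymm : ∀ p q, d p q = d q p) (hx : 0 < r x)
    (h : SelectableAfter d r x y ∨ SelectableAfter d r y x) (hxy : 2 * r x < r y) :
    x ∉ QBall d y (r y) ∧ y ∉ QBall d x (r x) := by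
  rcases h with h | h
  · exact absurd h.2 hxy.not_ge
  · have hdy : r y < d x y := h.1
    refine ⟨hdy.not_ge, fun hyx => ?_⟩
    change d y x ≤ r x at hyx
    rw [hsymm] at hyx
    linarith

variable {D Q j : ℕ} {C : ℝ} {F : Set X} {u : Finset X}

theorem card_filter_log_eq_le (hD : IsDoublingWith d D) (hsymm : ∀ p q, d p q = d q p)
    (htri : ∀ p p' q, d p q ≤ C * (d p p' + d p' q)) (hC : 0 < C) (hj : 4 * C ≤ 2 ^ j)
    (hF : F.Pairwise fun x y => SelectableAfter d r x y ∨ SelectableAfter d r y x)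
    (hr : ∀ x ∈ F, 0 < r x) (hu : ↑u ⊆ F) (hy : ∀ x ∈ u, y ∈ QBall d x (r x))
    (i : ℤ) :
    #{x ∈ u | Int.log 2 (r x) = i} ≤ D ^ j := by
  have hi : (0 : ℝ) < 2 ^ i := by positivity
  refine hD.card_le_of_pairwise_lt hsymm htri hC (R := 2 ^ (i + 1)) (p := y) hi ?_ ?_ ?_
  · rw [zpow_add_one₀ two_ne_zero]
    nlinarith
  · intro x hx
    obtain ⟨hxu, rfl⟩ := Finset.mem_filter.1 hx
    have := Int.lt_zpow_succ_log_self (b := 2) one_lt_two (r x)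
    change d x y ≤ _
    rw [hsymm]
    exact_mod_cast (hy x hxu).trans this.le
  · intro x hx x' hx' hne
    obtain ⟨hxu, hxi⟩ := Finset.mem_filter.1 hx
    obtain ⟨hx'u, hx'i⟩ := Finset.mem_filter.1 hx'
    have hlog : ∀ z ∈ u, Int.log 2 (r z) = i → (2 : ℝ) ^ i ≤ r z := fun z hz hzi => by
      exact_mod_cast hzi ▸ Int.zpow_log_le_self one_lt_two (hr z (hu hz))
    exact (le_min (hlog x hxu hxi) (hlog x' hx'u hx'i)).trans_lt
      (min_lt_of_selectableAfter hsymm (hF (hu hxu) (hu hx'u) hne))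

/-- One ball per scale gives a Besicovitch family through `y`: scales two apart force radii more
than double, so that neither centre lies in the other ball. -/
theorem card_le_of_log_gap (hsymm : ∀ p q, d p q = d q p)
    (hQ : ∀ (s : Finset X) (r : X → ℝ), IsBesicovitchFamily d s r → s.card ≤ Q)
    (hF : F.Pairwise fun x y => SelectableAfter d r x y ∨ SelectableAfter d r y x)
    (hr : ∀ x ∈ F, 0 < r x) (hu : ↑u ⊆ F) (hy : ∀ x ∈ u, y ∈ QBall d x (r x))
    {S : Finset ℤ} (hS : S ⊆ u.image fun x => Int.log 2 (r x))
    (hgap : ∀ i ∈ S, ∀ i' ∈ S, i < i' → i + 2 ≤ i') : S.card ≤ Q := by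
  classical
  obtain ⟨v, hvu, hinj, rfl⟩ := Finset.exists_subset_injOn_image_eq_of_surjOn (f := fun x =>
    Int.log 2 (r x)) (↑u) S fun i hi => by simpa using hS hi
  rw [Finset.card_image_of_injOn hinj]
  have hvF : ∀ x ∈ v, x ∈ F := fun x hx => hu (hvu hx)
  refine hQ v r ⟨fun x hx => hr x (hvF x hx), fun x hx x' hx' hne => ?_, y,
    fun x hx => hy x (hvu hx)⟩
  have hscale : ∀ z ∈ v, ∀ z' ∈ v, Int.log 2 (r z) < Int.log 2 (r z') → 2 * r z < r z' :=
    fun z hz z' hz' hlt => two_mul_lt_of_log_add_two_le (hr z' (hvF z' hz'))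
      (hgap _ (Finset.mem_image_of_mem _ hz) _ (Finset.mem_image_of_mem _ hz') hlt)
  rcases lt_or_gt_of_ne fun h => hne (hinj hx hx' h) with hlt | hlt
  · exact (notMem_qBall_of_selectableAfter hsymm (hr x (hvF x hx))
      (hF (hvF x hx) (hvF x' hx') hne) (hscale x hx x' hx' hlt)).1
  · exact (notMem_qBall_of_selectableAfter hsymm (hr x' (hvF x' hx'))
      (hF (hvF x' hx') (hvF x hx) (Ne.symm hne)) (hscale x' hx' x hx hlt)).2

theorem card_le_of_forall_mem_qBall (hD : IsDoublingWith d D) (hsymm : ∀ p q, d p q = d q p)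
    (htri : ∀ p p' q, d p q ≤ C * (d p p' + d p' q)) (hC : 0 < C) (hj : 4 * C ≤ 2 ^ j)
    (hQ : ∀ (s : Finset X) (r : X → ℝ), IsBesicovitchFamily d s r → s.card ≤ Q)
    (hF : F.Pairwise fun x y => SelectableAfter d r x y ∨ SelectableAfter d r y x)
    (hr : ∀ x ∈ F, 0 < r x) (hu : ↑u ⊆ F) (hy : ∀ x ∈ u, y ∈ QBall d x (r x)) :
    u.card ≤ D ^ j * (2 * Q) := by
  classical
  set scales := u.image fun x => Int.log 2 (r x)
  have hparity (p : ℤ → Prop) [DecidablePred p]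
      (hp : ∀ i i', p i → p i' → i % 2 = i' % 2) : #{i ∈ scales | p i} ≤ Q := by
    refine card_le_of_log_gap hsymm hQ hF hr hu hy (Finset.filter_subset _ _)
      fun i hi i' hi' hlt => ?_
    have := hp i i' (Finset.mem_filter.1 hi).2 (Finset.mem_filter.1 hi').2
    omega
  calc u.card ≤ D ^ j * scales.card := Finset.card_le_mul_card_image _ _ fun i _ =>
        card_filter_log_eq_le hD hsymm htri hC hj hF hr hu hy i
    _ = D ^ j * (#{i ∈ scales | i % 2 = 0} + #{i ∈ scales | ¬ i % 2 = 0}) := by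
        rw [Finset.card_filter_add_card_filter_not]
    _ ≤ D ^ j * (2 * Q) := by
        gcongr
        have h₀ := hparity (· % 2 = 0) fun i i' hi hi' => by omega
        have h₁ := hparity (¬ · % 2 = 0) fun i i' hi hi' => by omega
        omega

end Overlap

theorem Set.encard_le_coe_of_forall_finset_card_le {α : Type*} {s : Set α} {n : ℕ}
    (h : ∀ t : Finset α, ↑t ⊆ s → t.card ≤ n) : s.encard ≤ n := by
  by_cases hs : s.Finite
  · rw [hs.encard_eq_coe_toFinset_card]
    exact_mod_cast h _ hs.coe_toFinset.subset
  · obtain ⟨t, hts, ht⟩ := Set.Infinite.exists_subset_card_eq hs (n + 1)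
    have := h t hts
    omega

section Covering

variable {X : Type*} {d : X → X → ℝ}

theorem Finset.qBounded {s : Finset X} (hs : s.Nonempty) : QBounded d ↑s := by
  obtain ⟨x₀, hx₀⟩ := hs
  exact ⟨x₀, max 1 (s.sup' ⟨x₀, hx₀⟩ fun x => d x x₀), lt_max_of_lt_left one_pos,
    fun x hx => le_max_of_le_right (Finset.le_sup' (fun x => d x x₀) hx)⟩

theorem HasBCP.hasWBCP (h : HasBCP d) : HasWBCP d := by
  obtain ⟨N, hN, hbcp⟩ := h
  refine ⟨N, hN, fun s r ⟨hr, hcenters, z, hz⟩ => ?_⟩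
  obtain rfl | hs := s.eq_empty_or_nonempty
  · simp
  obtain ⟨F, hFs, -, hcover, hoverlap⟩ := hbcp ↑s r (Finset.qBounded hs) hr
  have hF : F = ↑s := by
    refine hFs.antisymm fun a ha => ?_
    obtain ⟨x, hxF, hax⟩ := hcover a ha
    obtain rfl | hne := eq_or_ne a x
    · exact hxF
    · exact absurd hax (hcenters a ha x (hFs hxF) hne)
  have hthrough : {x ∈ F | z ∈ QBall d x (r x)} = ↑s := by
    rw [hF]
    exact Set.sep_eq_self_iff_mem_true.2 hz
  simpa [hthrough] using hoverlap z

theorem subset_qBall_of_two_mul_le {C R ρ : ℝ} {A : Set X} {p a : X}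
    (hsymm : ∀ p q, d p q = d q p) (htri : ∀ p p' q, d p q ≤ C * (d p p' + d p' q))
    (hC : 0 ≤ C) (hA : A ⊆ QBall d p R) (ha : a ∈ A) (hρ : 2 * C * R ≤ ρ) :
    A ⊆ QBall d a ρ := fun b hb =>
  calc d b a ≤ C * (d b p + d p a) := htri b p a
    _ ≤ C * (R + R) := by
        gcongr
        exacts [hA hb, hsymm p a ▸ hA ha]
    _ ≤ ρ := by linarith

theorem HasWBCP.hasBCP (h : HasWBCP d) (hd : IsQuasiDist d) (hdoub : IsDoubling d) :
    HasBCP d := by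
  obtain ⟨-, hsymm, hzero, C, hC, htri⟩ := hd
  obtain ⟨D, hD1, hD : IsDoublingWith d D⟩ := hdoub
  obtain ⟨Q, hQ1, hQ⟩ := h
  obtain ⟨j, hj⟩ := pow_unbounded_of_one_lt (4 * C) one_lt_two
  have hN : 1 ≤ D ^ j * (2 * Q) := one_le_mul (Nat.one_le_pow _ _ hD1) (by omega)
  refine ⟨D ^ j * (2 * Q), hN, fun A r ⟨p, R, _, hA⟩ hr => ?_⟩
  by_cases hbig : ∃ a ∈ A, 2 * C * R ≤ r a
  · obtain ⟨a, ha, hra⟩ := hbig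
    refine ⟨{a}, Set.singleton_subset_iff.2 ha, Set.countable_singleton a,
      fun b hb => ⟨a, rfl, subset_qBall_of_two_mul_le hsymm htri (by linarith) hA ha hra hb⟩,
      fun y => ?_⟩
    calc {x ∈ ({a} : Set X) | y ∈ QBall d x (r x)}.encard ≤ ({a} : Set X).encard :=
          Set.encard_le_encard (Set.sep_subset _ _)
      _ ≤ _ := by rw [Set.encard_singleton]; exact_mod_cast hN
  push Not at hbig
  obtain ⟨F, hFA, hFc, hcover, hF⟩ := exists_greedy_cover hsymm (fun x => (hzero x x).2 rfl) hr
    (fun a ha => (hbig a ha).le) fun ε hε s hs hsep =>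
      hD.finite_of_pairwise_lt hsymm htri (by linarith) hε (hs.trans hA) hsep
  refine ⟨F, hFA, hFc, hcover, fun y =>
    Set.encard_le_coe_of_forall_finset_card_le fun u hu => ?_⟩
  exact card_le_of_forall_mem_qBall hD hsymm htri (by linarith) hj.le hQ hF
    (fun x hx => hr x (hFA hx)) (fun x hx => (hu hx).1) fun x hx => (hu hx).2

end Covering

theorem statement1 {X : Type*} (d : X → X → ℝ)
    (hd : IsQuasiDist d) (hdoub : IsDoubling d) :
    HasBCP d ↔ HasWBCP d :=
  ⟨fun h => h.hasWBCP, fun h => h.hasBCP hd hdoub⟩
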